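/- Let f be a C² symmetric homogeneous degree-one function on a neighborhood of the principal curvature vectors of the rotationally symmetric cone C = {(σ s ν, s)} in ℝ^{n+1}, inducing the curvature function F on matrices. Then the quantity ϰ = sup_{X ∈ C ∩ (B_3∖B̄_{1/3})} |X| · |Σ_{k,l} (∂²F/∂S_i^j∂S_k^l)(A_C^#) (∇_C A_C^#)_k^l| satisfies ϰ ≤ C(n) ( |∂²f(1,…,1,0)| + |∂_1 f(1,…,1,0) − ∂_n f(1,…,1,0)| ), where C(n) depends only on n. -/
import Mathlib


noncomputable section

/-- First partial derivative ∂ᵢf(λ). -/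
def pd {n : ℕ} (f : (Fin n → ℝ) → ℝ) (lam : Fin n → ℝ) (i : Fin n) : ℝ :=
  fderiv ℝ f lam (Pi.single i 1)

/-- Second partial derivative ∂²ᵢₖf(λ). -/
def pd2 {n : ℕ} (f : (Fin n → ℝ) → ℝ) (lam : Fin n → ℝ) (i k : Fin n) : ℝ :=
  fderiv ℝ (fun μ => fderiv ℝ f μ (Pi.single k 1)) lam (Pi.single i 1)

/-- Components of the second derivative ∂²F/∂Sᵢʲ∂Sₖˡ of the induced curvature
function F at a diagonal matrix with eigenvalues λ, via formulas (2), (3):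
∂²F/∂Sᵢʲ∂Sₖˡ = ∂²ᵢₖf δᵢⱼδₖₗ + (for i ≠ k) ((∂ᵢf − ∂ₖf)/(λᵢ − λₖ)) δᵢₗδₖⱼ. -/
def d2F {n : ℕ} (f : (Fin n → ℝ) → ℝ) (lam : Fin n → ℝ) (i j k l : Fin n) : ℝ :=
  (if i = j ∧ k = l then pd2 f lam i k else 0) +
  (if i ≠ k ∧ i = l ∧ k = j then (pd f lam i - pd f lam k) / (lam i - lam k) else 0)

/-- Principal curvature vector of the rotationally symmetric cone of slope σ at a
point of norm r: (1/(σr), …, 1/(σr), 0). Here n = m+2. -/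
def princ (m : ℕ) (σ r : ℝ) : Fin (m + 2) → ℝ :=
  fun i => if i = Fin.last (m + 1) then 0 else 1 / (σ * r)

/-- The vector (1,…,1,0) ∈ ℝⁿ. -/
def oneZero (m : ℕ) : Fin (m + 2) → ℝ :=
  fun i => if i = Fin.last (m + 1) then 0 else 1

/-- Components (∇_C A_C)(e_k, e_l, e_d) of the covariant derivative of the second
fundamental form of the cone in the orthonormal principal frame {e₁,…,e_{n−1},e_n}
(e_n radial), per Lemma 34 and total symmetry (Codazzi): the only nonzero
components have exactly one index equal to n and the other two equal, with value
−1/(σ r²). -/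
def covAcomp (m : ℕ) (σ r : ℝ) (k l d : Fin (m + 2)) : ℝ :=
  if (d = Fin.last (m + 1) ∧ k ≠ Fin.last (m + 1) ∧ l = k) ∨
     (l = Fin.last (m + 1) ∧ k ≠ Fin.last (m + 1) ∧ d = k) ∨
     (k = Fin.last (m + 1) ∧ l ≠ Fin.last (m + 1) ∧ d = l)
  then -(1 / (σ * r ^ 2)) else 0

lemma fderiv_scale {n : ℕ} {U : Set (Fin n → ℝ)} (hUo : IsOpen U)
    {g : (Fin n → ℝ) → ℝ} (hg : DifferentiableOn ℝ g U)
    {ρ c : ℝ} (heq : ∀ x ∈ U, g (ρ • x) = c * g x)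
    {lam : Fin n → ℝ} (hlam : lam ∈ U) (hlam2 : ρ • lam ∈ U) (v : Fin n → ℝ) :
    ρ * fderiv ℝ g (ρ • lam) v = c * fderiv ℝ g lam v := by
  have hd1 : DifferentiableAt ℝ g lam := hg.differentiableAt (hUo.mem_nhds hlam)
  have hd2 : DifferentiableAt ℝ g (ρ • lam) := hg.differentiableAt (hUo.mem_nhds hlam2)
  have hsm : HasFDerivAt (fun x : Fin n → ℝ => ρ • x)
      (ρ • ContinuousLinearMap.id ℝ (Fin n → ℝ)) lam := (hasFDerivAt_id lam).const_smul ρ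
  have h1 : HasFDerivAt (fun x => g (ρ • x))
      ((fderiv ℝ g (ρ • lam)).comp (ρ • ContinuousLinearMap.id ℝ (Fin n → ℝ))) lam :=
    hd2.hasFDerivAt.comp lam hsm
  have h2 : HasFDerivAt (fun x => c * g x) (c • fderiv ℝ g lam) lam :=
    hd1.hasFDerivAt.const_mul c
  have hev : (fun x => g (ρ • x)) =ᶠ[nhds lam] (fun x => c * g x) :=
    Filter.eventuallyEq_of_mem (hUo.mem_nhds hlam) (fun x hx => heq x hx)
  have h3 := Filter.EventuallyEq.fderiv_eq (𝕜 := ℝ) hev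
  rw [h1.fderiv, h2.fderiv] at h3
  have h4 := congrFun (congrArg DFunLike.coe h3) v
  simpa [smul_eq_mul, mul_comm] using h4

lemma fderiv_perm {n : ℕ} {U : Set (Fin n → ℝ)} (hUo : IsOpen U)
    {g : (Fin n → ℝ) → ℝ} (hg : DifferentiableOn ℝ g U)
    (π : Equiv.Perm (Fin n)) (heq : ∀ x ∈ U, g (x ∘ π) = g x)
    {lam : Fin n → ℝ} (hlam : lam ∈ U) (hfix : lam ∘ π = lam) (v : Fin n → ℝ) :
    fderiv ℝ g lam (v ∘ π) = fderiv ℝ g lam v := by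
  set L : (Fin n → ℝ) →L[ℝ] (Fin n → ℝ) :=
    LinearMap.toContinuousLinearMap (LinearMap.funLeft ℝ ℝ π) with hLdef
  have hL : ∀ x : Fin n → ℝ, L x = x ∘ π := fun x => rfl
  have hd : DifferentiableAt ℝ g lam := hg.differentiableAt (hUo.mem_nhds hlam)
  have h1 : HasFDerivAt (fun x => g (L x)) ((fderiv ℝ g lam).comp L) lam := by
    refine HasFDerivAt.comp lam ?_ L.hasFDerivAt
    rw [show L lam = lam from (hL lam).trans hfix]
    exact hd.hasFDerivAt
  have hev : (fun x => g (L x)) =ᶠ[nhds lam] g :=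
    Filter.eventuallyEq_of_mem (hUo.mem_nhds hlam) (fun x hx => (hL x) ▸ heq x hx)
  have h2 := Filter.EventuallyEq.fderiv_eq (𝕜 := ℝ) hev
  rw [h1.fderiv] at h2
  have h3 := congrFun (congrArg DFunLike.coe h2) v
  simpa [hL] using h3


/-- For the rotationally symmetric cone of slope σ and a symmetric,
homogeneous degree-one curvature function f (C³ on an open symmetric cone
neighborhood U of (1,…,1,0)), the quantity
ϰ = sup_{1/3 ≤ |X| ≤ 3} |X| · |Σ_{k,l} ∂²F(A_C^#) (∇_C A_C^#)ₖˡ|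
satisfies ϰ ≤ C(n) (|∂²f(1,…,1,0)| + |∂₁f(1,…,1,0) − ∂ₙf(1,…,1,0)|),
where C(n) depends only on n. -/
theorem kappa_estimate_rotationally_symmetric (m : ℕ) :
    ∃ C : ℝ, 0 < C ∧
      ∀ σ : ℝ, 0 < σ →
      ∀ U : Set (Fin (m + 2) → ℝ), IsOpen U →
        (∀ ρ : ℝ, 0 < ρ → ∀ lam ∈ U, ρ • lam ∈ U) →
        oneZero m ∈ U →
      ∀ f : (Fin (m + 2) → ℝ) → ℝ,
        ContDiffOn ℝ 3 f U →
        (∀ ρ : ℝ, 0 < ρ → ∀ lam ∈ U, f (ρ • lam) = ρ * f lam) →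
        (∀ π : Equiv.Perm (Fin (m + 2)), ∀ lam ∈ U, (lam ∘ π) ∈ U ∧ f (lam ∘ π) = f lam) →
      ∀ A B : ℝ,
        (∀ i k : Fin (m + 2), |pd2 f (oneZero m) i k| ≤ A) →
        |pd f (oneZero m) 0 - pd f (oneZero m) (Fin.last (m + 1))| ≤ B →
      ∀ r : ℝ, r ∈ Set.Icc (1 / 3 : ℝ) 3 →
      ∀ i j d : Fin (m + 2),
        r * |∑ k, ∑ l, d2F f (princ m σ r) i j k l * covAcomp m σ r k l d|
          ≤ C * (A + B) := by
  refine ⟨((m : ℝ) + 2)^2, by positivity, ?_⟩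
  intro σ hσ U hUo hcone hone f hf hhom hperm A B hA hB r hr i j d
  have hr0 : (0:ℝ) < r := lt_of_lt_of_le (by norm_num) hr.1
  have hσr : (0:ℝ) < σ * r := mul_pos hσ hr0
  have hc : (0:ℝ) < 1/(σ*r) := by positivity
  have hA0 : 0 ≤ A := le_trans (abs_nonneg _) (hA 0 0)
  have hB0 : 0 ≤ B := le_trans (abs_nonneg _) hB
  have hprinc : princ m σ r = (1/(σ*r)) • oneZero m := by
    funext x
    simp only [princ, oneZero, Pi.smul_apply, smul_eq_mul]
    split <;> simp
  have hPU : princ m σ r ∈ U := by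
    rw [hprinc]; exact hcone _ hc _ hone
  have hdf : DifferentiableOn ℝ f U := hf.differentiableOn (by norm_num)
  have hheq : ∀ x ∈ U, f ((1/(σ*r)) • x) = (1/(σ*r)) * f x := fun x hx => hhom _ hc x hx
  -- pd at princ equals pd at oneZero
  have hpd : ∀ a, pd f (princ m σ r) a = pd f (oneZero m) a := by
    intro a
    have := fderiv_scale hUo hdf hheq hone (hprinc ▸ hPU) (Pi.single a 1)
    unfold pd
    rw [hprinc]
    exact mul_left_cancel₀ (ne_of_gt hc) this
  -- differentiability of μ ↦ pd f μ k on U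
  have hf' : ContDiffOn ℝ 2 (fderiv ℝ f) U := hf.fderiv_of_isOpen hUo (by norm_num)
  have hgdiff : ∀ k : Fin (m+2), DifferentiableOn ℝ (fun μ => fderiv ℝ f μ (Pi.single k 1)) U := by
    intro k
    exact (hf'.clm_apply contDiffOn_const).differentiableOn (by norm_num)
  -- pd2 at princ
  have hpd2 : ∀ a b, pd2 f (princ m σ r) a b = (σ*r) * pd2 f (oneZero m) a b := by
    intro a b
    have hgeq : ∀ x ∈ U, (fun μ => fderiv ℝ f μ (Pi.single b 1)) ((1/(σ*r)) • x)
        = 1 * (fun μ => fderiv ℝ f μ (Pi.single b 1)) x := by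
      intro x hx
      have := fderiv_scale hUo hdf hheq hx (hcone _ hc _ hx) (Pi.single b 1)
      simpa using mul_left_cancel₀ (ne_of_gt hc) this
    have := fderiv_scale hUo (hgdiff b) hgeq hone (hprinc ▸ hPU) (Pi.single a 1)
    unfold pd2
    rw [hprinc]
    have h1 : fderiv ℝ (fun μ => fderiv ℝ f μ (Pi.single b 1)) ((1/(σ*r)) • oneZero m)
        (Pi.single a 1)
        = (σ*r) * fderiv ℝ (fun μ => fderiv ℝ f μ (Pi.single b 1)) (oneZero m)
          (Pi.single a 1) := by
      field_simp at this ⊢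
      linarith [this]
    exact h1
  -- symmetry: pd at oneZero equal for all non-last indices
  have hlast0 : (0 : Fin (m+2)) ≠ Fin.last (m+1) := by
    simp [Fin.ext_iff]
  have hsym : ∀ a : Fin (m+2), a ≠ Fin.last (m+1) →
      pd f (oneZero m) a = pd f (oneZero m) 0 := by
    intro a ha
    set π : Equiv.Perm (Fin (m+2)) := Equiv.swap a 0 with hπdef
    have hπlast : ∀ x : Fin (m+2), π x = Fin.last (m+1) ↔ x = Fin.last (m+1) := by
      intro x
      have hfixl : π (Fin.last (m+1)) = Fin.last (m+1) :=
        Equiv.swap_apply_of_ne_of_ne (Ne.symm ha) (Ne.symm hlast0)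
      constructor
      · intro h; exact π.injective (h.trans hfixl.symm)
      · intro h; rw [h]; exact hfixl
    have hfix : oneZero m ∘ π = oneZero m := by
      funext x
      simp only [Function.comp_apply, oneZero]
      by_cases hx : x = Fin.last (m+1)
      · rw [if_pos ((hπlast x).2 hx), if_pos hx]
      · rw [if_neg (fun h => hx ((hπlast x).1 h)), if_neg hx]
    have heqπ : ∀ x ∈ U, f (x ∘ π) = f x := fun x hx => (hperm π x hx).2
    have key := fderiv_perm hUo hdf π heqπ hone hfix (Pi.single a 1)
    have hcomp : (Pi.single a (1:ℝ)) ∘ π = Pi.single 0 1 := by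
      funext x
      simp only [Function.comp_apply, Pi.single_apply]
      have : π x = a ↔ x = 0 := by
        rw [hπdef]
        constructor
        · intro h
          have := congrArg (Equiv.swap a 0) h
          simpa [Equiv.swap_apply_self, Equiv.swap_apply_left] using this
        · intro h; rw [h]; exact Equiv.swap_apply_right a 0
      simp [this]
    rw [hcomp] at key
    unfold pd
    exact key.symm
  -- bound on d2F entries
  have hd2F : ∀ k l : Fin (m+2), |d2F f (princ m σ r) i j k l| ≤ σ*r*A + σ*r*B := by
    intro k l
    unfold d2F
    refine (abs_add_le _ _).trans (add_le_add ?_ ?_)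
    · split_ifs with h
      · rw [hpd2 i k, abs_mul, abs_of_pos hσr]
        exact mul_le_mul_of_nonneg_left (hA i k) hσr.le
      · rw [abs_zero]; exact mul_nonneg hσr.le hA0
    · split_ifs with h
      · obtain ⟨hik, -, -⟩ := h
        rw [hpd i, hpd k]
        by_cases hi : i = Fin.last (m+1)
        · have hk : k ≠ Fin.last (m+1) := fun hk => hik (hi.trans hk.symm)
          rw [hsym k hk]
          subst hi
          simp only [princ, if_neg hk, eq_self_iff_true, if_true]
          rw [zero_sub, abs_div, abs_neg, abs_of_pos hc, one_div, div_eq_mul_inv, inv_inv]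
          have hB' : |pd f (oneZero m) (Fin.last (m+1)) - pd f (oneZero m) 0| ≤ B := by
            rw [abs_sub_comm]; exact hB
          calc |pd f (oneZero m) (Fin.last (m+1)) - pd f (oneZero m) 0| * (σ*r)
              ≤ B * (σ*r) := mul_le_mul_of_nonneg_right hB' hσr.le
            _ = σ*r*B := by ring
        · by_cases hk : k = Fin.last (m+1)
          · rw [hsym i hi]
            subst hk
            simp only [princ, if_neg hi, eq_self_iff_true, if_true]
            rw [sub_zero, abs_div, abs_of_pos hc, one_div, div_eq_mul_inv, inv_inv]
            calc |pd f (oneZero m) 0 - pd f (oneZero m) (Fin.last (m+1))| * (σ*r)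
                ≤ B * (σ*r) := mul_le_mul_of_nonneg_right hB hσr.le
              _ = σ*r*B := by ring
          · rw [hsym i hi, hsym k hk, sub_self, zero_div, abs_zero]
            exact mul_nonneg hσr.le hB0
      · rw [abs_zero]; exact mul_nonneg hσr.le hB0
  have hcov : ∀ k l : Fin (m+2), |covAcomp m σ r k l d| ≤ 1/(σ*r^2) := by
    intro k l
    unfold covAcomp
    split_ifs
    · rw [abs_neg, abs_of_pos (by positivity)]
    · rw [abs_zero]; positivity
  have hterm : ∀ k l : Fin (m+2),
      |d2F f (princ m σ r) i j k l * covAcomp m σ r k l d| ≤ (A+B)/r := by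
    intro k l
    rw [abs_mul]
    calc |d2F f (princ m σ r) i j k l| * |covAcomp m σ r k l d|
        ≤ (σ*r*A + σ*r*B) * (1/(σ*r^2)) :=
          mul_le_mul (hd2F k l) (hcov k l) (abs_nonneg _)
            (add_nonneg (mul_nonneg hσr.le hA0) (mul_nonneg hσr.le hB0))
      _ = (A+B)/r := by
          field_simp
  calc r * |∑ k, ∑ l, d2F f (princ m σ r) i j k l * covAcomp m σ r k l d|
      ≤ r * ∑ k, ∑ l, |d2F f (princ m σ r) i j k l * covAcomp m σ r k l d| := by
        apply mul_le_mul_of_nonneg_left _ hr0.le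
        exact (Finset.abs_sum_le_sum_abs _ _).trans
          (Finset.sum_le_sum fun k _ => Finset.abs_sum_le_sum_abs _ _)
    _ ≤ r * ∑ _k : Fin (m+2), ∑ _l : Fin (m+2), (A+B)/r := by
        apply mul_le_mul_of_nonneg_left _ hr0.le
        exact Finset.sum_le_sum fun k _ => Finset.sum_le_sum fun l _ => hterm k l
    _ = ((m:ℝ)+2)^2 * (A+B) := by
        simp only [Finset.sum_const, Finset.card_univ, Fintype.card_fin, nsmul_eq_mul]
        push_cast
        field_simp


end
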